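/- Let f(z) = z + a₂z² + a₃z³ + ⋯ belong to Ω. Then |T₃(1)| = |1 - 2a₂² + 2a₃a₂² - a₃²| ≤ 13/8. -/

import Mathlib

/-!
The function `g z = z f'(z) - f z` has Taylor coefficients `(n - 1) aₙ` and `‖g‖ < 1/2` on the
unit disc, so Cauchy's estimate gives `‖a₂‖ ≤ 1/2` and `‖a₃‖ ≤ 1/4`. Then
`T₃(1) = (1 - a₃)(1 + a₃ - 2a₂²)`, and the parallelogram law
`‖1 - a₃‖² + ‖1 + a₃‖² = 2 + 2‖a₃‖² ≤ 17/8` reduces the bound to maximising `u v + u / 2`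
on the disc `u² + v² ≤ 17/8`.
-/

open Metric Filter
open scoped Topology

section IteratedDeriv

variable {𝕜 : Type*} [NontriviallyNormedField 𝕜] [CompleteSpace 𝕜] {f : 𝕜 → 𝕜} {z : 𝕜}

theorem AnalyticAt.differentiableAt_iteratedDeriv (hf : AnalyticAt 𝕜 f z) (n : ℕ) :
    DifferentiableAt 𝕜 (iteratedDeriv n f) z := by
  rw [iteratedDeriv_eq_iterate]
  exact (hf.iterated_deriv n).differentiableAt

theorem AnalyticAt.iteratedDeriv_mul_deriv_sub (hf : AnalyticAt 𝕜 f z) (n : ℕ) :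
    iteratedDeriv n (fun w => w * deriv f w - f w) z =
      z * iteratedDeriv (n + 1) f z + (n - 1) * iteratedDeriv n f z := by
  induction n generalizing z with
  | zero => simp [iteratedDeriv_one, sub_eq_add_neg]
  | succ n ih =>
    have hloc : iteratedDeriv n (fun w => w * deriv f w - f w) =ᶠ[𝓝 z]
        fun w => w * iteratedDeriv (n + 1) f w + (n - 1) * iteratedDeriv n f w :=
      hf.eventually_analyticAt.mono fun _ => ih
    have hderiv := ((hasDerivAt_id' z).fun_mul
      (hf.differentiableAt_iteratedDeriv (n + 1)).hasDerivAt).fun_add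
      ((hf.differentiableAt_iteratedDeriv n).hasDerivAt.const_mul ((n : 𝕜) - 1))
    rw [iteratedDeriv_succ, hloc.deriv_eq, hderiv.deriv, ← iteratedDeriv_succ,
      ← iteratedDeriv_succ]
    push_cast
    ring

end IteratedDeriv

theorem Complex.norm_iteratedDeriv_le_of_forall_mem_ball_norm_le {F : Type*}
    [NormedAddCommGroup F] [NormedSpace ℂ F] [CompleteSpace F] {f : ℂ → F} {c : ℂ} {R C : ℝ}
    (hR : 0 < R) (hf : DifferentiableOn ℂ f (ball c R)) (hC : ∀ z ∈ ball c R, ‖f z‖ ≤ C)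
    (n : ℕ) : ‖iteratedDeriv n f c‖ ≤ n.factorial * C / R ^ n := by
  have hlim : Tendsto (fun r : ℝ => n.factorial * C / r ^ n) (𝓝[<] R)
      (𝓝 (n.factorial * C / R ^ n)) :=
    ((continuousAt_const.div (continuousAt_pow R n) (pow_ne_zero n hR.ne')).tendsto).mono_left
      nhdsWithin_le_nhds
  refine ge_of_tendsto hlim ?_
  filter_upwards [Ioo_mem_nhdsLT hR] with r ⟨hr0, hrR⟩
  refine norm_iteratedDeriv_le_of_forall_mem_sphere_norm_le n hr0 ?_ fun z hz => hC z ?_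
  · exact (hf.mono (closedBall_subset_ball hrR)).diffContOnCl_ball le_rfl
  · exact sphere_subset_ball hrR hz

theorem mul_add_half_le_of_sq_add_sq_le {u v : ℝ} (huv : u ^ 2 + v ^ 2 ≤ 17 / 8) :
    u * v + u / 2 ≤ 13 / 8 := by
  nlinarith [sq_nonneg (u - v), sq_nonneg (u + v - 2)]

theorem norm_toeplitz_det_le {a₂ a₃ : ℂ} (ha₂ : ‖a₂‖ ≤ 1 / 2) (ha₃ : ‖a₃‖ ≤ 1 / 4) :
    ‖1 - 2 * a₂ ^ 2 + 2 * a₃ * a₂ ^ 2 - a₃ ^ 2‖ ≤ 13 / 8 := by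
  have hsplit :
      1 - 2 * a₂ ^ 2 + 2 * a₃ * a₂ ^ 2 - a₃ ^ 2 = (1 - a₃) * ((1 + a₃) - 2 * a₂ ^ 2) := by
    ring
  have hpar := parallelogram_law_with_norm ℝ (1 : ℂ) a₃
  have hsq : ‖(1 : ℂ) - a₃‖ ^ 2 + ‖1 + a₃‖ ^ 2 ≤ 17 / 8 := by
    rw [norm_one] at hpar
    nlinarith [norm_nonneg a₃]
  have ha₂sq : ‖2 * a₂ ^ 2‖ ≤ 1 / 2 := by
    rw [norm_mul, norm_pow, Complex.norm_two]
    nlinarith [norm_nonneg a₂]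
  calc ‖1 - 2 * a₂ ^ 2 + 2 * a₃ * a₂ ^ 2 - a₃ ^ 2‖
      ≤ ‖1 - a₃‖ * (‖1 + a₃‖ + 1 / 2) := by
        rw [hsplit, norm_mul]
        gcongr
        exact (norm_sub_le _ _).trans (by linarith)
    _ ≤ 13 / 8 := by
        have := mul_add_half_le_of_sq_add_sq_le hsq
        linarith

theorem stmt_17_general (f : ℂ → ℂ) (hf : AnalyticOnNhd ℂ f (ball 0 1))
    (hΩ : ∀ z ∈ ball (0 : ℂ) 1, ‖z * deriv f z - f z‖ < 1 / 2)
    (a₂ a₃ : ℂ)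
    (ha₂ : a₂ = iteratedDeriv 2 f 0 / 2)
    (ha₃ : a₃ = iteratedDeriv 3 f 0 / 6) :
    ‖1 - 2 * a₂ ^ 2 + 2 * a₃ * a₂ ^ 2 - a₃ ^ 2‖ ≤ 13 / 8 := by
  set g : ℂ → ℂ := fun z => z * deriv f z - f z
  have hg : DifferentiableOn ℂ g (ball 0 1) :=
    ((analyticOnNhd_id.mul (hf.deriv_of_isOpen isOpen_ball)).sub hf).differentiableOn
  have hcoeff (n : ℕ) : ‖((n : ℂ) - 1) * iteratedDeriv n f 0‖ ≤ n.factorial / 2 := by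
    have := Complex.norm_iteratedDeriv_le_of_forall_mem_ball_norm_le one_pos hg
      (fun z hz => (hΩ z hz).le) n
    rwa [(hf 0 (mem_ball_self one_pos)).iteratedDeriv_mul_deriv_sub, zero_mul, zero_add,
      one_pow, div_one, mul_one_div] at this
  refine norm_toeplitz_det_le ?_ ?_
  · have h2 := hcoeff 2
    norm_num [Nat.factorial] at h2
    rw [ha₂, norm_div, Complex.norm_two]
    linarith
  · have h3 := hcoeff 3
    norm_num [Nat.factorial, norm_mul] at h3
    rw [ha₃, norm_div]
    norm_num
    linarith

theorem stmt_17 (f : ℂ → ℂ) (hf : AnalyticOnNhd ℂ f (ball 0 1))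
    (hf0 : f 0 = 0) (hf1 : deriv f 0 = 1)
    (hΩ : ∀ z ∈ ball (0 : ℂ) 1, ‖z * deriv f z - f z‖ < 1 / 2)
    (a₂ a₃ : ℂ)
    (ha₂ : a₂ = iteratedDeriv 2 f 0 / 2)
    (ha₃ : a₃ = iteratedDeriv 3 f 0 / 6) :
    ‖1 - 2 * a₂ ^ 2 + 2 * a₃ * a₂ ^ 2 - a₃ ^ 2‖ ≤ 13 / 8 :=
  stmt_17_general f hf hΩ a₂ a₃ ha₂ ha₃
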